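/- arXiv:2308.04678 — 4 statements merged into one kernel-verified Lean document; each statement's English description precedes it below -/
import Mathlib

section
/- For all real s ≥ 1, the modified Bessel function of the first kind satisfies I_1(s) ≤ √(2/(π s)) · e^s. -/
open Real

/-- The modified Bessel function of the first kind of order 1. -/
noncomputable def besselI1 (s : ℝ) : ℝ :=
  ∑' m : ℕ, (s / 2) ^ (2 * m + 1) / ((Nat.factorial m : ℝ) * (Nat.factorial (m + 1) : ℝ))

/-!
Compare the series termwise with `c · (eˢ - 1)`, `c = √(2/(πs))`: the `m`-th Bessel term is
dominated by `c` times the terms of index `2m+1` and `2m+2` of the exponential series. Since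
`(2n)! = C(2n,n) (n!)²`, with `n = m + 1` this reduces to `2n C(2n,n) ≤ 4ⁿ c (2n + s)`, which
follows from `C(2n,n) √n ≤ 4ⁿ`, from AM-GM `2n + s ≥ 2√(2ns)` and from `π ≤ 4`.
-/

open scoped Nat

theorem Nat.centralBinom_sq_mul_le (n : ℕ) : n.centralBinom ^ 2 * (3 * n + 1) ≤ 16 ^ n := by
  induction n with
  | zero => simp
  | succ n ih =>
    -- the factor `3n + 1` (rather than `n`) is what makes the induction close
    have hpoly : (2 * n + 1) ^ 2 * (3 * n + 4) ≤ 4 * (n + 1) ^ 2 * (3 * n + 1) := by ring_nf; lia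
    refine Nat.le_of_mul_le_mul_right ?_ (by positivity : 0 < (n + 1) ^ 2 * (3 * n + 1))
    calc (n + 1).centralBinom ^ 2 * (3 * (n + 1) + 1) * ((n + 1) ^ 2 * (3 * n + 1))
        = ((n + 1) * (n + 1).centralBinom) ^ 2 * (3 * n + 4) * (3 * n + 1) := by ring
      _ = 4 * ((2 * n + 1) ^ 2 * (3 * n + 4)) * (n.centralBinom ^ 2 * (3 * n + 1)) := by
          rw [Nat.succ_mul_centralBinom_succ]; ring
      _ ≤ 4 * (4 * (n + 1) ^ 2 * (3 * n + 1)) * 16 ^ n := by gcongr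
      _ = 16 ^ (n + 1) * ((n + 1) ^ 2 * (3 * n + 1)) := by ring

theorem Nat.centralBinom_mul_sqrt_le (n : ℕ) : (n.centralBinom : ℝ) * √n ≤ 4 ^ n := by
  have h : ((n.centralBinom : ℝ) * √n) ^ 2 ≤ (4 ^ n) ^ 2 := by
    rw [mul_pow, sq_sqrt n.cast_nonneg, ← pow_mul, mul_comm n, pow_mul]
    norm_num
    exact_mod_cast (Nat.mul_le_mul_left _ (by lia)).trans n.centralBinom_sq_mul_le
  exact le_of_sq_le_sq h (by positivity)

theorem two_mul_sqrt_le_sqrt_two_div_pi_mul {t s : ℝ} (ht : 0 ≤ t) (hs : 0 < s) :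
    2 * √t ≤ √(2 / (π * s)) * (2 * t + s) := by
  have hpos : 0 < π * s := by positivity
  calc 2 * √t = √(4 * t) := by
        rw [sqrt_mul' _ ht, show (4 : ℝ) = 2 ^ 2 by norm_num, sqrt_sq zero_le_two]
    _ ≤ √(2 / (π * s) * (2 * t + s) ^ 2) := by
        refine sqrt_le_sqrt ?_
        rw [div_mul_eq_mul_div, le_div_iff₀ hpos]
        nlinarith [pi_le_four, sq_nonneg (2 * t - s), mul_nonneg ht hs.le]
    _ = √(2 / (π * s)) * (2 * t + s) := by
        rw [sqrt_mul (by positivity), sqrt_sq (by positivity)]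

theorem Nat.factorial_two_mul (n : ℕ) : (2 * n)! = n.centralBinom * n ! * n ! := by
  rw [two_mul, ← Nat.add_choose_mul_factorial_mul_factorial, Nat.centralBinom_eq_two_mul_choose,
    two_mul]

theorem hasSum_pow_div_factorial_odd_add_even (x : ℝ) :
    HasSum (fun m : ℕ => x ^ (2 * m + 1) / (2 * m + 1)! + x ^ (2 * m + 2) / (2 * m + 2)!)
      (exp x - 1) := by
  have h : HasSum (fun n : ℕ => x ^ (n + 1) / (n + 1)!) (exp x - 1) := by
    rw [exp_eq_exp_ℝ]
    simpa using (hasSum_nat_add_iff' 1).2 (NormedSpace.expSeries_div_hasSum_exp x)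
  have he := (h.summable.comp_injective (mul_right_injective₀ two_ne_zero)).hasSum
  have ho := (h.summable.comp_injective (fun a b hab => by simpa using hab :
    Function.Injective fun k : ℕ => 2 * k + 1)).hasSum
  rw [h.unique (he.even_add_odd ho)]
  exact he.add ho

theorem Nat.two_mul_mul_centralBinom_le {s : ℝ} (hs : 0 < s) (n : ℕ) :
    2 * n * (n.centralBinom : ℝ) ≤ 4 ^ n * (√(2 / (π * s)) * (2 * n + s)) :=
  calc 2 * n * (n.centralBinom : ℝ) = n.centralBinom * √n * (2 * √n) := by
        rw [mul_mul_mul_comm, mul_self_sqrt n.cast_nonneg]; ring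
    _ ≤ 4 ^ n * (√(2 / (π * s)) * (2 * n + s)) := by
        gcongr ?_ * ?_
        · exact n.centralBinom_mul_sqrt_le
        · exact two_mul_sqrt_le_sqrt_two_div_pi_mul n.cast_nonneg hs

theorem besselI1_term_le {s : ℝ} (hs : 0 < s) (m : ℕ) :
    (s / 2) ^ (2 * m + 1) / ((m ! : ℝ) * ((m + 1)! : ℝ)) ≤
      √(2 / (π * s)) * (s ^ (2 * m + 1) / (2 * m + 1)! + s ^ (2 * m + 2) / (2 * m + 2)!) := by
  have hfact : ((2 * m + 2)! : ℝ) = (m + 1).centralBinom * (m + 1)! * (m + 1)! :=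
    mod_cast (m + 1).factorial_two_mul
  have hlhs : (s / 2) ^ (2 * m + 1) / ((m ! : ℝ) * ((m + 1)! : ℝ)) =
      s ^ (2 * m + 1) / (2 * m + 2)! *
        (2 * (m + 1 : ℕ) * (m + 1).centralBinom / 4 ^ (m + 1)) := by
    have hC : ((m + 1).centralBinom : ℝ) ≠ 0 := mod_cast (m + 1).centralBinom_ne_zero
    have h4 : (4 : ℝ) ^ (m + 1) = 2 * 2 ^ (2 * m + 1) := by
      rw [pow_succ, pow_succ, pow_mul]; norm_num; ring
    rw [div_pow, hfact, Nat.factorial_succ m, h4]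
    push_cast
    field_simp
  have hrhs : s ^ (2 * m + 1) / (2 * m + 1)! + s ^ (2 * m + 2) / (2 * m + 2)! =
      s ^ (2 * m + 1) / (2 * m + 2)! * (2 * (m + 1 : ℕ) + s) := by
    rw [Nat.factorial_succ (2 * m + 1)]
    push_cast
    field_simp
    ring
  rw [hlhs, hrhs, mul_left_comm]
  gcongr
  rw [div_le_iff₀ (by positivity)]
  linarith [(m + 1).two_mul_mul_centralBinom_le hs]

theorem besselI1_upper (s : ℝ) (hs : 1 ≤ s) :
    besselI1 s ≤ Real.sqrt (2 / (π * s)) * Real.exp s := by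
  have hs0 : 0 < s := zero_lt_one.trans_le hs
  have hdom := (hasSum_pow_div_factorial_odd_add_even s).mul_left √(2 / (π * s))
  have hsum : Summable fun m : ℕ => (s / 2) ^ (2 * m + 1) / ((m ! : ℝ) * ((m + 1)! : ℝ)) :=
    hdom.summable.of_nonneg_of_le (fun m => by positivity) (besselI1_term_le hs0)
  calc besselI1 s ≤ √(2 / (π * s)) * (exp s - 1) :=
        hasSum_le (besselI1_term_le hs0) hsum.hasSum hdom
    _ ≤ √(2 / (π * s)) * exp s := by gcongr; linarith
end

section
/- Let μ(n) = (π/2)√(2n) and for n ≥ 2 set μ⁻ = μ(n−1), μ⁺ = μ(n+1). Then for all real μ = μ(n) ≥ 3, one has the inequalities 1 + 3π⁴/(16μ⁴) + π⁸/(35μ⁸) ≤ μ³/√((μ⁻)³(μ⁺)³) ≤ 1 + 3π⁴/(16μ⁴) + π⁸/(12μ⁸). -/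
open Real

lemma aux_low (q:ℝ)(h0:0≤q)(h1:q≤0.301): (1+3/4*q+16/35*q^2)^4*(1-q)^3 ≤ 1 := by
  have h := sub_nonneg.2 h1
  nlinarith [mul_nonneg h (pow_nonneg h0 1), mul_nonneg h (pow_nonneg h0 2),
    mul_nonneg h (pow_nonneg h0 3), mul_nonneg h (pow_nonneg h0 4),
    mul_nonneg h (pow_nonneg h0 5), mul_nonneg h (pow_nonneg h0 6),
    mul_nonneg h (pow_nonneg h0 7), mul_nonneg h (pow_nonneg h0 8),
    mul_nonneg h (pow_nonneg h0 9), mul_nonneg h (pow_nonneg h0 10),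
    pow_nonneg h0 2, pow_nonneg h0 3]

lemma aux_up (q:ℝ)(h0:0≤q)(h1:q≤0.301): 1 ≤ (1+3/4*q+4/3*q^2)^4*(1-q)^3 := by
  have h := sub_nonneg.2 h1
  nlinarith [mul_nonneg h (pow_nonneg h0 1), mul_nonneg h (pow_nonneg h0 2),
    mul_nonneg h (pow_nonneg h0 3), mul_nonneg h (pow_nonneg h0 4),
    mul_nonneg h (pow_nonneg h0 5), mul_nonneg h (pow_nonneg h0 6),
    mul_nonneg h (pow_nonneg h0 7), mul_nonneg h (pow_nonneg h0 8),
    mul_nonneg h (pow_nonneg h0 9), mul_nonneg h (pow_nonneg h0 10),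
    pow_nonneg h0 2, pow_nonneg h0 3]

theorem mu_ratio_bounds (μ : ℝ) (hμ : 3 ≤ μ) :
    1 + 3 * π ^ 4 / (16 * μ ^ 4) + π ^ 8 / (35 * μ ^ 8)
      ≤ μ ^ 3 / Real.sqrt ((Real.sqrt (μ ^ 2 - π ^ 2 / 2)) ^ 3
          * (Real.sqrt (μ ^ 2 + π ^ 2 / 2)) ^ 3) ∧
    μ ^ 3 / Real.sqrt ((Real.sqrt (μ ^ 2 - π ^ 2 / 2)) ^ 3
          * (Real.sqrt (μ ^ 2 + π ^ 2 / 2)) ^ 3)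
      ≤ 1 + 3 * π ^ 4 / (16 * μ ^ 4) + π ^ 8 / (12 * μ ^ 8) := by
  have hπ : (0:ℝ) < π := Real.pi_pos
  have hπl : π < 3.141593 := Real.pi_lt_d6
  have hμ0 : (0:ℝ) < μ := by linarith
  have hπ2 : π ^ 2 ≤ 9.8697 := by nlinarith
  have hπ4 : π ^ 4 ≤ 97.42 := by nlinarith [sq_nonneg (π^2), hπ2]
  have hμ2 : (9:ℝ) ≤ μ ^ 2 := by nlinarith
  have hμ4 : (81:ℝ) ≤ μ ^ 4 := by nlinarith
  have hs : (0:ℝ) < μ ^ 2 - π ^ 2 / 2 := by nlinarith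
  have hu : (0:ℝ) < μ ^ 2 + π ^ 2 / 2 := by positivity
  set s : ℝ := μ ^ 2 - π ^ 2 / 2 with hsdef
  set u : ℝ := μ ^ 2 + π ^ 2 / 2 with hudef
  have hss : (0:ℝ) < Real.sqrt s ^ 3 * Real.sqrt u ^ 3 := by
    have := Real.sqrt_pos.2 hs
    have := Real.sqrt_pos.2 hu
    positivity
  set D : ℝ := Real.sqrt (Real.sqrt s ^ 3 * Real.sqrt u ^ 3) with hDdef
  have hDpos : 0 < D := Real.sqrt_pos.2 hss
  have e1 : Real.sqrt s ^ 2 = s := Real.sq_sqrt hs.le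
  have e2 : Real.sqrt u ^ 2 = u := Real.sq_sqrt hu.le
  have hD4 : D ^ 4 = s ^ 3 * u ^ 3 := by
    have h2 : D ^ 2 = Real.sqrt s ^ 3 * Real.sqrt u ^ 3 := Real.sq_sqrt hss.le
    have h3 : D ^ 4 = (D ^ 2) ^ 2 := by ring
    rw [h3, h2]
    calc (Real.sqrt s ^ 3 * Real.sqrt u ^ 3) ^ 2
        = (Real.sqrt s ^ 2) ^ 3 * (Real.sqrt u ^ 2) ^ 3 := by ring
      _ = s ^ 3 * u ^ 3 := by rw [e1, e2]
  set q : ℝ := π ^ 4 / (4 * μ ^ 4) with hqdef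
  have hq0 : 0 ≤ q := by positivity
  have hq1 : q ≤ 0.301 := by
    rw [hqdef, div_le_iff₀ (by positivity)]
    nlinarith
  have hsu : s ^ 3 * u ^ 3 = μ ^ 12 * (1 - q) ^ 3 := by
    have h1 : s * u = μ ^ 4 * (1 - q) := by
      rw [hsdef, hudef, hqdef]
      field_simp
      ring
    calc s ^ 3 * u ^ 3 = (s * u) ^ 3 := by ring
      _ = (μ ^ 4 * (1 - q)) ^ 3 := by rw [h1]
      _ = μ ^ 12 * (1 - q) ^ 3 := by ring
  have hLeq : 1 + 3 * π ^ 4 / (16 * μ ^ 4) + π ^ 8 / (35 * μ ^ 8)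
      = 1 + 3/4 * q + 16/35 * q ^ 2 := by
    rw [hqdef]; field_simp; ring
  have hUeq : 1 + 3 * π ^ 4 / (16 * μ ^ 4) + π ^ 8 / (12 * μ ^ 8)
      = 1 + 3/4 * q + 4/3 * q ^ 2 := by
    rw [hqdef]; field_simp; ring
  constructor
  · rw [le_div_iff₀ hDpos, hLeq]
    have hL0 : 0 ≤ (1 + 3/4 * q + 16/35 * q ^ 2) := by positivity
    refine le_of_pow_le_pow_left₀ (n := 4) (by norm_num) (by positivity) ?_
    have h4 : ((1 + 3/4 * q + 16/35 * q ^ 2) * D) ^ 4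
        = μ ^ 12 * ((1 + 3/4 * q + 16/35 * q ^ 2) ^ 4 * (1 - q) ^ 3) := by
      calc ((1 + 3/4 * q + 16/35 * q ^ 2) * D) ^ 4
          = (1 + 3/4 * q + 16/35 * q ^ 2) ^ 4 * D ^ 4 := by ring
        _ = _ := by rw [hD4, hsu]; ring
    rw [h4]
    calc μ ^ 12 * ((1 + 3/4 * q + 16/35 * q ^ 2) ^ 4 * (1 - q) ^ 3)
        ≤ μ ^ 12 * 1 := by
          exact mul_le_mul_of_nonneg_left (aux_low q hq0 hq1) (by positivity)
      _ = (μ ^ 3) ^ 4 := by ring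
  · rw [div_le_iff₀ hDpos, hUeq]
    refine le_of_pow_le_pow_left₀ (n := 4) (by norm_num) ?_ ?_
    · have hU0 : 0 ≤ (1 + 3/4 * q + 4/3 * q ^ 2) := by positivity
      positivity
    have h4 : ((1 + 3/4 * q + 4/3 * q ^ 2) * D) ^ 4
        = μ ^ 12 * ((1 + 3/4 * q + 4/3 * q ^ 2) ^ 4 * (1 - q) ^ 3) := by
      calc ((1 + 3/4 * q + 4/3 * q ^ 2) * D) ^ 4
          = (1 + 3/4 * q + 4/3 * q ^ 2) ^ 4 * D ^ 4 := by ring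
        _ = _ := by rw [hD4, hsu]; ring
    rw [h4]
    calc (μ ^ 3) ^ 4 = μ ^ 12 * 1 := by ring
      _ ≤ μ ^ 12 * ((1 + 3/4 * q + 4/3 * q ^ 2) ^ 4 * (1 - q) ^ 3) := by
          exact mul_le_mul_of_nonneg_left (aux_up q hq0 hq1) (by positivity)
end

section
/- For μ ≥ 3, setting a = √(μ² − π²/2) and b = √(μ² + π²/2), one has −π⁴/(16μ³) − 5π⁸/(512μ⁷) < a + b − 2μ < −π⁴/(16μ³). -/
open Real

private lemma aux_pos (m c : ℝ) (hm : 3 ≤ m) (hc0 : 0 < c) (hc5 : c < 5) :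
    0 < 320*m^8 - 384*c*m^6 - 96*c^2*m^4 - 40*c^3*m^2 - 25*c^4 := by
  have hm0 : (0:ℝ) < m := by linarith
  have hm2 : (9:ℝ) ≤ m^2 := by nlinarith
  have hc2 : c^2 < 25 := by nlinarith
  have hc3 : c^3 < 125 := by nlinarith
  have hc4 : c^4 < 625 := by nlinarith
  have a1 : c*m^6 < 5*m^6 := mul_lt_mul_of_pos_right hc5 (by positivity)
  have a2 : c^2*m^4 < 25*m^4 := mul_lt_mul_of_pos_right hc2 (by positivity)
  have a3 : c^3*m^2 < 125*m^2 := mul_lt_mul_of_pos_right hc3 (by positivity)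
  have b1 : 9*m^6 ≤ m^8 := by nlinarith
  have b2 : 9*m^4 ≤ m^6 := by nlinarith
  have b3 : 9*m^2 ≤ m^4 := by nlinarith
  linarith

set_option maxHeartbeats 1000000 in
theorem sqrt_sum_bounds (μ : ℝ) (hμ : 3 ≤ μ) :
    -π ^ 4 / (16 * μ ^ 3) - 5 * π ^ 8 / (512 * μ ^ 7)
      < Real.sqrt (μ ^ 2 - π ^ 2 / 2) + Real.sqrt (μ ^ 2 + π ^ 2 / 2) - 2 * μ ∧
    Real.sqrt (μ ^ 2 - π ^ 2 / 2) + Real.sqrt (μ ^ 2 + π ^ 2 / 2) - 2 * μ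
      < -π ^ 4 / (16 * μ ^ 3) := by
  have hπ : (3.14 : ℝ) < π := by linarith [Real.pi_gt_d6]
  have hπ' : π < 3.15 := Real.pi_lt_d2
  have hπ0 : (0:ℝ) < π := by linarith
  set c : ℝ := π ^ 2 / 2 with hc
  have hc0 : 0 < c := by positivity
  have hc5 : c < 5 := by rw [hc]; nlinarith
  have hμ0 : (0:ℝ) < μ := by linarith
  have hμ2 : c < μ ^ 2 := by nlinarith
  have haux := aux_pos μ c hμ hc0 hc5
  have hcm6 : 0 ≤ c*μ^6 := by positivity
  have hc3m2 : 0 ≤ c^3*μ^2 := by positivity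
  have hc2m4 : 0 ≤ c^2*μ^4 := by positivity
  set Xa : ℝ := μ - c/(2*μ) - c^2/(8*μ^3) - c^3/(16*μ^5) with hXa
  set Xb : ℝ := μ + c/(2*μ) - c^2/(8*μ^3) + c^3/(16*μ^5) with hXb
  set g : ℝ := 5*c^4/(64*μ^7) with hg
  clear_value Xa Xb g
  have hg0 : 0 < g := by rw [hg]; positivity
  -- positivity of the lower approximants
  have hXagkey : (64*μ^7) * (Xa - g)
      = 64*μ^8 - 32*c*μ^6 - 8*c^2*μ^4 - 4*c^3*μ^2 - 5*c^4 := by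
    rw [hXa, hg]; field_simp; ring
  have hXag0 : 0 < Xa - g := by
    have hnum : 0 < 64*μ^8 - 32*c*μ^6 - 8*c^2*μ^4 - 4*c^3*μ^2 - 5*c^4 := by linarith
    have := hXagkey ▸ hnum
    exact (mul_pos_iff_of_pos_left (by positivity : (0:ℝ) < 64*μ^7)).mp this
  have hXbgkey : (64*μ^7) * (Xb - g)
      = 64*μ^8 + 32*c*μ^6 - 8*c^2*μ^4 + 4*c^3*μ^2 - 5*c^4 := by
    rw [hXb, hg]; field_simp; ring
  have hXbg0 : 0 < Xb - g := by
    have hnum : 0 < 64*μ^8 + 32*c*μ^6 - 8*c^2*μ^4 + 4*c^3*μ^2 - 5*c^4 := by linarith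
    have := hXbgkey ▸ hnum
    exact (mul_pos_iff_of_pos_left (by positivity : (0:ℝ) < 64*μ^7)).mp this
  have hXa0 : 0 < Xa := by linarith
  have hXb0 : 0 < Xb := by linarith
  -- upper bounds
  have ha_up : Real.sqrt (μ^2 - c) < Xa := by
    rw [Real.sqrt_lt' hXa0]
    have key : (256*μ^10) * (Xa^2 - (μ^2 - c)) = 20*c^4*μ^4 + 4*c^5*μ^2 + c^6 := by
      rw [hXa]; field_simp; ring
    have hnum : (0:ℝ) < 20*c^4*μ^4 + 4*c^5*μ^2 + c^6 := by positivity
    have := key ▸ hnum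
    have := (mul_pos_iff_of_pos_left (by positivity : (0:ℝ) < 256*μ^10)).mp this
    linarith
  have hb_up : Real.sqrt (μ^2 + c) < Xb := by
    rw [Real.sqrt_lt' hXb0]
    have key : (256*μ^10) * (Xb^2 - (μ^2 + c)) = 20*c^4*μ^4 - 4*c^5*μ^2 + c^6 := by
      rw [hXb]; field_simp; ring
    have hnum : (0:ℝ) < 20*c^4*μ^4 - 4*c^5*μ^2 + c^6 := by
      have h1 : c^5*μ^2 < 5*(c^4*μ^2) := by
        have : c * (c^4*μ^2) < 5 * (c^4*μ^2) := mul_lt_mul_of_pos_right hc5 (by positivity)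
        nlinarith [this]
      have h2 : c^4*μ^2 ≤ c^4*μ^4 :=
        mul_le_mul_of_nonneg_left (by nlinarith [sq_nonneg (μ^2-9), (show (9:ℝ) ≤ μ^2 by nlinarith)] : μ^2 ≤ μ^4) (pow_pos hc0 4).le
      nlinarith [pow_pos hc0 6]
    have := key ▸ hnum
    have := (mul_pos_iff_of_pos_left (by positivity : (0:ℝ) < 256*μ^10)).mp this
    linarith
  -- lower bounds
  have ha_lo : Xa - g < Real.sqrt (μ^2 - c) := by
    rw [Real.lt_sqrt hXag0.le]
    have key : (4096*μ^14) * ((μ^2 - c) - (Xa - g)^2)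
        = c^4 * (320*μ^8 - 384*c*μ^6 - 96*c^2*μ^4 - 40*c^3*μ^2 - 25*c^4) := by
      rw [hXa, hg]; field_simp; ring
    have hnum : (0:ℝ) < c^4 * (320*μ^8 - 384*c*μ^6 - 96*c^2*μ^4 - 40*c^3*μ^2 - 25*c^4) :=
      mul_pos (by positivity) haux
    have := key ▸ hnum
    have := (mul_pos_iff_of_pos_left (by positivity : (0:ℝ) < 4096*μ^14)).mp this
    linarith
  have hb_lo : Xb - g < Real.sqrt (μ^2 + c) := by
    rw [Real.lt_sqrt hXbg0.le]
    have key : (4096*μ^14) * ((μ^2 + c) - (Xb - g)^2)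
        = c^4 * (320*μ^8 + 384*c*μ^6 - 96*c^2*μ^4 + 40*c^3*μ^2 - 25*c^4) := by
      rw [hXb, hg]; field_simp; ring
    have hnum : (0:ℝ) < c^4 * (320*μ^8 + 384*c*μ^6 - 96*c^2*μ^4 + 40*c^3*μ^2 - 25*c^4) := by
      apply mul_pos (by positivity); linarith
    have := key ▸ hnum
    have := (mul_pos_iff_of_pos_left (by positivity : (0:ℝ) < 4096*μ^14)).mp this
    linarith
  have hcdef : μ ^ 2 - π ^ 2 / 2 = μ^2 - c := by rw [hc]
  have hcdef' : μ ^ 2 + π ^ 2 / 2 = μ^2 + c := by rw [hc]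
  rw [hcdef, hcdef']
  have hsum_up : Xa + Xb - 2*μ = -π ^ 4 / (16 * μ ^ 3) := by
    rw [hXa, hXb, hc]; field_simp; ring
  have hsum_lo : Xa + Xb - 2*g - 2*μ = -π ^ 4 / (16 * μ ^ 3) - 5 * π ^ 8 / (512 * μ ^ 7) := by
    rw [hXa, hXb, hg, hc]; field_simp; ring
  constructor
  · linarith
  · linarith
end

section
/- If u and v are real numbers with 15/16 ≤ u < v < 1 and u + √((1−u)³) > v, then 4(1−u)(1−v) − (1−uv)² > 0. -/
theorem jia_criterion (u v : ℝ) (hu : 15 / 16 ≤ u) (huv : u < v) (hv : v < 1)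
    (h : u + Real.sqrt ((1 - u) ^ 3) > v) :
    4 * (1 - u) * (1 - v) - (1 - u * v) ^ 2 > 0 := by
  have h1 : v - u < Real.sqrt ((1 - u) ^ 3) := by linarith
  have key : (v - u) ^ 2 < (1 - u) ^ 3 := (Real.lt_sqrt (by linarith)).mp h1
  -- with a = 1-u, b = 1-v: (a-b)^2 < a^3, a ≤ 1/16 so b > 3a/4
  have ha : 1 - u ≤ 1 / 16 := by linarith
  have hb : 0 < 1 - v := by linarith
  have hab : v - u < (1 - u) / 4 := by nlinarith [sq_nonneg (v - u), sq_nonneg (1 - u)]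
  nlinarith [sq_nonneg (1 - u - (1 - v)), mul_pos hb (sub_pos.mpr huv), sq_nonneg ((1-u)*(1-v)), mul_pos hb hb, sq_nonneg (1 - u)]
end
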